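/- Let μ > 0. The function ℝ³ → ℝ given by k ↦ √(|k|⁴/4 + μ·|k|²) (the Bogoliubov dispersion relation for contact interaction, as a function of the momentum vector) is strictly convex and vanishes at k = 0. -/

import Mathlib

/-!
For `t ≥ 0`, `√(t⁴/4 + μt²) = e(t) := t √(μ + t²/4)`. With `s = μ + t²/4` one has
`e'(t) = 2√s - μ/√s`, which is strictly increasing in `t ≥ 0`, so `e` is strictly convex and
strictly increasing on `[0, ∞)`. Such a function composed with the norm of a strictly convex
space is strictly convex: when `‖x‖ ≠ ‖y‖` the triangle inequality and monotonicity reduce to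
strict convexity of `e`, and when `‖x‖ = ‖y‖` the open segment lies in the open ball of
radius `‖x‖`.
-/

open Set

theorem StrictConvexOn.comp_norm {E : Type*} [NormedAddCommGroup E] [NormedSpace ℝ E]
    [StrictConvexSpace ℝ E] {g : ℝ → ℝ} (hg : StrictConvexOn ℝ (Ici 0) g)
    (hg_mono : StrictMonoOn g (Ici 0)) :
    StrictConvexOn ℝ univ fun x : E => g ‖x‖ := by
  refine ⟨convex_univ, fun x _ y _ hxy a b ha hb hab => ?_⟩
  have hnonneg : 0 ≤ a * ‖x‖ + b * ‖y‖ := by positivity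
  rcases eq_or_ne ‖x‖ ‖y‖ with hnorm | hnorm
  · calc g ‖a • x + b • y‖
        < g ‖x‖ := hg_mono (norm_nonneg _) (norm_nonneg _)
            (norm_combo_lt_of_ne le_rfl hnorm.ge hxy ha hb hab)
      _ = a * g ‖x‖ + b * g ‖y‖ := by rw [← hnorm, ← add_mul, hab, one_mul]
  · calc g ‖a • x + b • y‖
        ≤ g (a * ‖x‖ + b * ‖y‖) := hg_mono.monotoneOn (norm_nonneg _) hnonneg <| by
            simpa [norm_smul, abs_of_pos ha, abs_of_pos hb] using norm_add_le (a • x) (b • y)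
      _ < a * g ‖x‖ + b * g ‖y‖ := hg.2 (norm_nonneg x) (norm_nonneg y) hnorm ha hb hab

noncomputable def bogoliubov (μ t : ℝ) : ℝ := t * √(μ + t ^ 2 / 4)

theorem bogoliubov_eq_sqrt (μ : ℝ) {t : ℝ} (ht : 0 ≤ t) :
    bogoliubov μ t = √(t ^ 4 / 4 + μ * t ^ 2) := by
  rw [bogoliubov, show t ^ 4 / 4 + μ * t ^ 2 = t ^ 2 * (μ + t ^ 2 / 4) by ring,
    Real.sqrt_mul (sq_nonneg t), Real.sqrt_sq ht]

theorem strictMonoOn_bogoliubov {μ : ℝ} (hμ : 0 < μ) : StrictMonoOn (bogoliubov μ) (Ici 0) := by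
  intro a ha b _ hab
  have hb : 0 < b := lt_of_le_of_lt ha hab
  have hsqrt : √(μ + a ^ 2 / 4) ≤ √(μ + b ^ 2 / 4) := by gcongr
  exact mul_lt_mul hab hsqrt (by positivity) hb.le

theorem hasDerivAt_bogoliubov {μ : ℝ} (hμ : 0 < μ) (t : ℝ) :
    HasDerivAt (bogoliubov μ) (2 * √(μ + t ^ 2 / 4) - μ / √(μ + t ^ 2 / 4)) t := by
  have hs : 0 < μ + t ^ 2 / 4 := by positivity
  have hinner : HasDerivAt (fun t : ℝ => μ + t ^ 2 / 4) (t / 2) t := by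
    refine (((hasDerivAt_pow 2 t).div_const 4).const_add μ).congr_deriv ?_
    norm_num
    ring
  refine ((hasDerivAt_id' t).mul (hinner.sqrt hs.ne')).congr_deriv ?_
  have hsq : √(μ + t ^ 2 / 4) ^ 2 = μ + t ^ 2 / 4 := Real.sq_sqrt hs.le
  have hpos : 0 < √(μ + t ^ 2 / 4) := Real.sqrt_pos.2 hs
  generalize √(μ + t ^ 2 / 4) = r at hsq hpos ⊢
  field_simp
  linear_combination -4 * hsq

theorem strictConvexOn_bogoliubov {μ : ℝ} (hμ : 0 < μ) :
    StrictConvexOn ℝ (Ici 0) (bogoliubov μ) := by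
  refine StrictMonoOn.strictConvexOn_of_deriv (convex_Ici 0)
    (fun t _ => (hasDerivAt_bogoliubov hμ t).continuousAt.continuousWithinAt) ?_
  rw [interior_Ici]
  intro a ha b _ hab
  rw [(hasDerivAt_bogoliubov hμ a).deriv, (hasDerivAt_bogoliubov hμ b).deriv]
  have hsa : 0 < √(μ + a ^ 2 / 4) := Real.sqrt_pos.2 (by positivity)
  have hsqrt : √(μ + a ^ 2 / 4) < √(μ + b ^ 2 / 4) := by
    gcongr
    exact ha.le
  have hinv : μ / √(μ + b ^ 2 / 4) < μ / √(μ + a ^ 2 / 4) :=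
    div_lt_div_of_pos_left hμ hsa hsqrt
  linarith

theorem stmt6 (μ : ℝ) (hμ : 0 < μ) :
    StrictConvexOn ℝ Set.univ
      (fun k : EuclideanSpace ℝ (Fin 3) => Real.sqrt (‖k‖^4/4 + μ * ‖k‖^2)) ∧
    Real.sqrt (‖(0 : EuclideanSpace ℝ (Fin 3))‖^4/4
        + μ * ‖(0 : EuclideanSpace ℝ (Fin 3))‖^2) = 0 := by
  refine ⟨?_, by simp⟩
  have hfun : (fun k : EuclideanSpace ℝ (Fin 3) => √(‖k‖ ^ 4 / 4 + μ * ‖k‖ ^ 2))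
      = fun k => bogoliubov μ ‖k‖ := by
    funext k
    rw [bogoliubov_eq_sqrt μ (norm_nonneg k)]
  rw [hfun]
  exact (strictConvexOn_bogoliubov hμ).comp_norm (strictMonoOn_bogoliubov hμ)
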